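/- Let ω be an n-dimensional probability vector, Q an n×m joint probability matrix, and α ∈ [0,1]. Let W_ω = {w : q^{|w} ≺ ω}. If Σ_{w ∈ W_ω} q_w ≥ 1 − α, then Ω ≻_c Q, where Ω is the n... by 2 joint probability matrix whose first column is (α, 0, ..., 0)ᵀ and second column is (1−α)·ω. -/

import Mathlib

/-!
Choose `θ_w ∈ [0, 1]`, vanishing off `W_ω`, with `∑ θ_w q_w = 1 - α`; this is possible because
`q(W_ω) ≥ 1 - α`. Column `w` of `Q` is `(1 - θ_w) q_w q^{|w} + θ_w q_w q^{|w}`. The first part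
comes from the column `α e₀` of `Ω` through a doubly stochastic circulant matrix with first column
`q^{|w}`; the second from the column `(1 - α) ω` through a doubly stochastic `D` with
`D ω = q^{|w}`, which exists by Hardy–Littlewood–Pólya since `ω ≻ q^{|w}` for `w ∈ W_ω`. The
weights `α r₀ = (1 - θ) q` and `(1 - α) r₁ = θ q` are then rows of a row-stochastic matrix.

For Hardy–Littlewood–Pólya, `v` lies in the convex hull of the rearrangements of `u`: otherwise a
separating functional `c` would give `∑ cᵢ vᵢ > max_σ ∑ cᵢ u_{σ i} = ∑ c↓ᵢ u↓ᵢ`, while the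
rearrangement inequality and summation by parts against `∑_{i<k} v↓ᵢ ≤ ∑_{i<k} u↓ᵢ` give `≤`.
-/
open Matrix Finset

/-- Row-stochastic matrix: nonnegative entries, each row sums to 1. -/
def RowStoch {ℓ m : ℕ} (T : Matrix (Fin ℓ) (Fin m) ℝ) : Prop :=
  (∀ y w, 0 ≤ T y w) ∧ ∀ y, ∑ w, T y w = 1

/-- Doubly stochastic matrix. -/
def DStoch {n : ℕ} (D : Matrix (Fin n) (Fin n) ℝ) : Prop :=
  (∀ i j, 0 ≤ D i j) ∧ (∀ i, ∑ j, D i j = 1) ∧ (∀ j, ∑ i, D i j = 1)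

/-- Conditional majorization `P ≻_c Q` via classical-conditioned random relabelings:
`Q = ∑ j, D j * P * R j` with each `D j` doubly stochastic, each `R j` entrywise
nonnegative, and `∑ j, R j` row-stochastic. -/
def CondMaj {n ℓ m : ℕ} (P : Matrix (Fin n) (Fin ℓ) ℝ)
    (Q : Matrix (Fin n) (Fin m) ℝ) : Prop :=
  ∃ (J : ℕ) (D : Fin J → Matrix (Fin n) (Fin n) ℝ)
    (R : Fin J → Matrix (Fin ℓ) (Fin m) ℝ),
    (∀ j, DStoch (D j)) ∧ (∀ j y w, 0 ≤ R j y w) ∧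
    RowStoch (∑ j, R j) ∧ Q = ∑ j, D j * P * R j

/-- Joint probability matrix: nonnegative entries summing to one. -/
def JointProb {n ℓ : ℕ} (P : Matrix (Fin n) (Fin ℓ) ℝ) : Prop :=
  (∀ x y, 0 ≤ P x y) ∧ ∑ x, ∑ y, P x y = 1

/-- Column sum (marginal). -/
noncomputable def ColSum {n m : ℕ} (Q : Matrix (Fin n) (Fin m) ℝ) (w : Fin m) : ℝ :=
  ∑ x, Q x w
/-- Nonincreasing rearrangement of a vector. -/
noncomputable def sortDesc {n : ℕ} (u : Fin n → ℝ) : Fin n → ℝ :=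
  fun i => u (Tuple.sort (fun j => -u j) i)

/-- Sum of the `k` largest entries of `u`. -/
noncomputable def pSumDesc {n : ℕ} (u : Fin n → ℝ) (k : ℕ) : ℝ :=
  ∑ i ∈ Finset.univ.filter (fun i : Fin n => (i : ℕ) < k), sortDesc u i

/-- `Majorizes u v` means `u ≻ v`: all partial sums of the sorted `u` dominate
those of `v`, and the total sums coincide. -/
def Majorizes {n : ℕ} (u v : Fin n → ℝ) : Prop :=
  (∀ k : ℕ, pSumDesc v k ≤ pSumDesc u k) ∧ ∑ i, u i = ∑ i, v i


section Majorization

variable {n : ℕ}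

def prefixSum {M : Type*} [AddCommMonoid M] (f : Fin n → M) (k : ℕ) : M :=
  ∑ i ∈ univ.filter (fun i : Fin n => (i : ℕ) < k), f i

section prefixSum

variable {M : Type*} [AddCommMonoid M]

lemma prefixSum_zero (f : Fin n → M) : prefixSum f 0 = 0 := by
  simp [prefixSum]

lemma prefixSum_succ (f : Fin n → M) {k : ℕ} (hk : k < n) :
    prefixSum f (k + 1) = prefixSum f k + f ⟨k, hk⟩ := by
  have : univ.filter (fun i : Fin n => (i : ℕ) < k + 1)
      = insert ⟨k, hk⟩ (univ.filter fun i : Fin n => (i : ℕ) < k) := by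
    ext i
    simp only [Finset.mem_filter, Finset.mem_univ, true_and, Finset.mem_insert, Fin.ext_iff]
    omega
  rw [prefixSum, this, Finset.sum_insert (by simp), add_comm, prefixSum]

lemma prefixSum_of_le (f : Fin n → M) {k : ℕ} (hk : n ≤ k) : prefixSum f k = ∑ i, f i :=
  Finset.sum_congr (Finset.filter_true_of_mem fun i _ => i.isLt.trans_le hk) fun _ _ => rfl

lemma prefixSum_sub {G : Type*} [AddCommGroup G] (f g : Fin n → G) (k : ℕ) :
    prefixSum (f - g) k = prefixSum f k - prefixSum g k :=
  Finset.sum_sub_distrib _ _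

end prefixSum

/-- Summation by parts. -/
lemma sum_mul_le_sum_mul_of_prefixSum_le {g a b : Fin n → ℝ} (hg : Antitone g)
    (hpre : ∀ k, prefixSum a k ≤ prefixSum b k) (htot : ∑ i, a i = ∑ i, b i) :
    ∑ i, g i * a i ≤ ∑ i, g i * b i := by
  obtain _ | n := n
  · simp
  set d := b - a
  have hD : ∀ k, 0 ≤ prefixSum d k := fun k => by
    simpa [d, prefixSum_sub] using hpre k
  have key : ∀ k (hk : k < n + 1),
      g ⟨k, hk⟩ * prefixSum d (k + 1) ≤ prefixSum (fun i => g i * d i) (k + 1) := by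
    intro k
    induction k with
    | zero => intro hk; simp [prefixSum_succ _ hk, prefixSum_zero]
    | succ k ih =>
      intro hk
      have hgk : g ⟨k + 1, hk⟩ ≤ g ⟨k, by omega⟩ := hg (Fin.mk_le_mk.2 k.le_succ)
      rw [prefixSum_succ _ hk, prefixSum_succ _ hk]
      nlinarith [ih (by omega), hD (k + 1)]
  have := key n n.lt_succ_self
  rw [prefixSum_of_le _ le_rfl, prefixSum_of_le _ le_rfl,
    show ∑ i, d i = 0 by simp [d, Finset.sum_sub_distrib, htot]] at this
  simpa [d, mul_sub, Finset.sum_sub_distrib] using this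

lemma antitone_sortDesc (u : Fin n → ℝ) : Antitone (sortDesc u) := fun i j hij => by
  simpa [sortDesc] using Tuple.monotone_sort (fun j => -u j) hij

lemma sum_sortDesc (u : Fin n → ℝ) : ∑ i, sortDesc u i = ∑ i, u i :=
  Equiv.sum_comp _ u

lemma sortDesc_symm_apply (u : Fin n → ℝ) (i : Fin n) :
    sortDesc u ((Tuple.sort fun j => -u j).symm i) = u i := by
  simp [sortDesc]

lemma Majorizes.exists_perm_sum_mul_le {u v : Fin n → ℝ} (huv : Majorizes u v) (c : Fin n → ℝ) :
    ∃ σ : Equiv.Perm (Fin n), ∑ i, c i * v i ≤ ∑ i, c i * u (σ i) := by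
  set τ := Tuple.sort fun j => -c j
  refine ⟨τ.symm.trans (Tuple.sort fun j => -u j), ?_⟩
  calc ∑ i, c i * v i
      = ∑ i, sortDesc c i * sortDesc v ((τ.trans (Tuple.sort fun j => -v j).symm) i) := by
        rw [← Equiv.sum_comp τ]
        simp only [Equiv.trans_apply, sortDesc_symm_apply]; rfl
    _ ≤ ∑ i, sortDesc c i * sortDesc v i :=
        ((antitone_sortDesc c).monovary (antitone_sortDesc v)).sum_mul_comp_perm_le_sum_mul
    _ ≤ ∑ i, sortDesc c i * sortDesc u i :=
        sum_mul_le_sum_mul_of_prefixSum_le (antitone_sortDesc c) huv.1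
          (by rw [sum_sortDesc, sum_sortDesc, huv.2])
    _ = ∑ i, c i * u ((τ.symm.trans (Tuple.sort fun j => -u j)) i) := by
        rw [← Equiv.sum_comp τ (fun i => c i * u _)]
        simp only [sortDesc, Equiv.trans_apply, Equiv.symm_apply_apply]; rfl

lemma Majorizes.mem_convexHull_perm {u v : Fin n → ℝ} (huv : Majorizes u v) :
    v ∈ convexHull ℝ (Set.range fun σ : Equiv.Perm (Fin n) => u ∘ σ) := by
  by_contra hv
  obtain ⟨f, t, hft, htf⟩ := geometric_hahn_banach_closed_point (convex_convexHull ℝ _)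
    ((Set.finite_range _).isClosed_convexHull (𝕜 := ℝ)) hv
  set c : Fin n → ℝ := fun i => f fun j => if i = j then 1 else 0
  have hf : ∀ x, f x = ∑ i, c i * x i := fun x => by
    simpa [mul_comm] using LinearMap.pi_apply_eq_sum_univ (f : (Fin n → ℝ) →ₗ[ℝ] ℝ) x
  obtain ⟨σ, hσ⟩ := huv.exists_perm_sum_mul_le c
  have := hft _ (subset_convexHull ℝ _ ⟨σ, rfl⟩)
  rw [hf] at this htf
  exact (this.trans htf).not_ge hσ

/-- **Hardy–Littlewood–Pólya**. -/
theorem Majorizes.exists_mem_doublyStochastic {u v : Fin n → ℝ} (huv : Majorizes u v) :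
    ∃ D ∈ doublyStochastic ℝ (Fin n), D *ᵥ u = v := by
  have hsub : Set.range (fun σ : Equiv.Perm (Fin n) => u ∘ σ) ⊆
      (fun D => D *ᵥ u) '' (doublyStochastic ℝ (Fin n) : Set (Matrix (Fin n) (Fin n) ℝ)) := by
    rintro _ ⟨σ, rfl⟩
    exact ⟨σ.permMatrix ℝ, permMatrix_mem_doublyStochastic, permMatrix_mulVec _⟩
  have hconv : Convex ℝ
      ((fun D => D *ᵥ u) '' (doublyStochastic ℝ (Fin n) : Set (Matrix (Fin n) (Fin n) ℝ))) :=
    (convex_doublyStochastic (R := ℝ) (n := Fin n)).is_linear_image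
      (f := fun D => D *ᵥ u) ⟨fun A B => add_mulVec A B u, fun c A => smul_mulVec c A u⟩
  exact convexHull_min hsub hconv huv.mem_convexHull_perm

end Majorization

section Weights

variable {ι : Type*} [Fintype ι]

lemma exists_sum_mul_eq_of_le_sum [DecidableEq ι] {q : ι → ℝ} {W : Finset ι} {t : ℝ}
    (ht0 : 0 ≤ t) (ht : t ≤ ∑ i ∈ W, q i) :
    ∃ θ : ι → ℝ, (∀ i, 0 ≤ θ i) ∧ (∀ i, θ i ≤ 1) ∧ (∀ i ∉ W, θ i = 0) ∧
      ∑ i, θ i * q i = t := by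
  set s := ∑ i ∈ W, q i
  refine ⟨fun i => if i ∈ W then t / s else 0, fun i => ?_, fun i => ?_, fun i hi => if_neg hi,
    ?_⟩
  · dsimp only
    split_ifs
    exacts [div_nonneg ht0 (ht0.trans ht), le_rfl]
  · dsimp only
    split_ifs
    exacts [div_le_one_of_le₀ ht (ht0.trans ht), zero_le_one]
  · simp only [ite_mul, zero_mul, Finset.sum_ite_mem, Finset.univ_inter, ← Finset.mul_sum]
    rcases eq_or_ne s 0 with hs | hs
    · simp [hs, le_antisymm (hs ▸ ht) ht0]
    · exact div_mul_cancel₀ t hs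

lemma exists_sum_eq_one_mul_eq [Nonempty ι] {a : ι → ℝ} (ha : ∀ i, 0 ≤ a i) {t : ℝ}
    (ht : ∑ i, a i = t) :
    ∃ r : ι → ℝ, (∀ i, 0 ≤ r i) ∧ ∑ i, r i = 1 ∧ ∀ i, t * r i = a i := by
  subst ht
  rcases eq_or_ne (∑ i, a i) 0 with h | h
  · refine ⟨fun _ => (Fintype.card ι : ℝ)⁻¹, fun _ => by positivity, by simp, fun i => ?_⟩
    rw [h, zero_mul, eq_comm]
    exact (Finset.sum_eq_zero_iff_of_nonneg fun i _ => ha i).1 h i (Finset.mem_univ i)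
  · refine ⟨fun i => (∑ i, a i)⁻¹ * a i, fun i => mul_nonneg (inv_nonneg.2 (Finset.sum_nonneg
      fun i _ => ha i)) (ha i), ?_, fun i => mul_inv_cancel_left₀ h (a i)⟩
    simp [← Finset.mul_sum, h]

end Weights

section CondMaj

variable {n : ℕ}

lemma exists_mem_doublyStochastic_sum_mul_apply_zero {p : Fin (n + 1) → ℝ} (hp : ∀ x, 0 ≤ p x) :
    ∃ D ∈ doublyStochastic ℝ (Fin (n + 1)), ∀ x, (∑ y, p y) * D x 0 = p x := by
  obtain ⟨r, hr0, hr1, hrp⟩ := exists_sum_eq_one_mul_eq hp rfl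
  refine ⟨of fun x j => r (x - j), mem_doublyStochastic_iff_sum.2 ⟨fun _ _ => hr0 _, ?_, ?_⟩,
    fun x => by simpa using hrp x⟩
  · intro x
    simpa [hr1] using Equiv.sum_comp (Equiv.subLeft x) r
  · intro j
    simpa [hr1] using Equiv.sum_comp (Equiv.subRight j) r

lemma condMaj_of_sum {ι : Type*} [Fintype ι] {ℓ m : ℕ} {P : Matrix (Fin n) (Fin ℓ) ℝ}
    {Q : Matrix (Fin n) (Fin m) ℝ} (D : ι → Matrix (Fin n) (Fin n) ℝ)
    (R : ι → Matrix (Fin ℓ) (Fin m) ℝ) (hD : ∀ i, D i ∈ doublyStochastic ℝ (Fin n))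
    (hR : ∀ i y w, 0 ≤ R i y w) (hRsum : RowStoch (∑ i, R i))
    (hQ : Q = ∑ i, D i * P * R i) : CondMaj P Q := by
  let e := Fintype.equivFin ι
  refine ⟨Fintype.card ι, D ∘ e.symm, R ∘ e.symm, fun j => mem_doublyStochastic_iff_sum.1 (hD _),
    fun j => hR _, ?_, ?_⟩
  · simpa only [Function.comp_apply, e.symm.sum_comp R] using hRsum
  · simpa only [Function.comp_apply, e.symm.sum_comp fun i => D i * P * R i] using hQ

lemma condMaj_of_col_eq_sum {ℓ m : ℕ} {P : Matrix (Fin n) (Fin ℓ) ℝ}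
    {Q : Matrix (Fin n) (Fin m) ℝ} (D : Fin ℓ → Fin m → Matrix (Fin n) (Fin n) ℝ)
    (R : Matrix (Fin ℓ) (Fin m) ℝ) (hD : ∀ y w, D y w ∈ doublyStochastic ℝ (Fin n))
    (hR : RowStoch R) (hQ : ∀ w, Qᵀ w = ∑ y, R y w • D y w *ᵥ Pᵀ y) : CondMaj P Q := by
  refine condMaj_of_sum (fun p : Fin ℓ × Fin m => D p.1 p.2)
    (fun p => single p.1 p.2 (R p.1 p.2)) (fun p => hD _ _) (fun p y w => ?_) ?_ ?_
  · by_cases h : p.1 = y ∧ p.2 = w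
    · simp [h, hR.1]
    · simp [single_apply_of_ne (h := h)]
  · simp only [Fintype.sum_prod_type]
    rwa [← matrix_eq_sum_single]
  · ext x w
    rw [← transpose_apply Q w x, hQ w, Matrix.sum_apply, Fintype.sum_prod_type]
    simp only [Finset.sum_apply, Pi.smul_apply, smul_eq_mul]
    refine Finset.sum_congr rfl fun y _ => ?_
    rw [Finset.sum_eq_single w (fun w' _ hw' => by simp [hw'.symm]) (by simp),
      mul_single_apply_same, mul_comm]
    rfl

def omegaMatrix (α : ℝ) (ω : Fin (n + 1) → ℝ) : Matrix (Fin (n + 1)) (Fin 2) ℝ :=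
  of fun x j => if j = 0 then (if x = 0 then α else 0) else (1 - α) * ω x

lemma condMaj_omegaMatrix {m : ℕ} {α : ℝ} {ω : Fin (n + 1) → ℝ} {Q : Matrix (Fin (n + 1)) (Fin m) ℝ}
    {r₀ r₁ : Fin m → ℝ} (hr₀ : ∀ w, 0 ≤ r₀ w) (hr₀1 : ∑ w, r₀ w = 1) (hr₁ : ∀ w, 0 ≤ r₁ w)
    (hr₁1 : ∑ w, r₁ w = 1) (E M : Fin m → Matrix (Fin (n + 1)) (Fin (n + 1)) ℝ)
    (hE : ∀ w, E w ∈ doublyStochastic ℝ (Fin (n + 1)))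
    (hM : ∀ w, M w ∈ doublyStochastic ℝ (Fin (n + 1)))
    (hQ : ∀ x w, Q x w = α * r₀ w * E w x 0 + (1 - α) * r₁ w * (M w *ᵥ ω) x) :
    CondMaj (omegaMatrix α ω) Q := by
  have hcol₀ : (omegaMatrix α ω)ᵀ 0 = Pi.single 0 α := by
    ext x; simp [omegaMatrix, Pi.single_apply]
  have hcol₁ : (omegaMatrix α ω)ᵀ 1 = (1 - α) • ω := by
    ext x; simp [omegaMatrix]
  refine condMaj_of_col_eq_sum (fun y w => ![E w, M w] y) (of ![r₀, r₁])
    (fun y w => by fin_cases y <;> simp [hE, hM]) ⟨fun y w => ?_, fun y => ?_⟩ fun w => ?_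
  · fin_cases y <;> simp [hr₀, hr₁]
  · fin_cases y <;> simp [hr₀1, hr₁1]
  · ext x
    simp only [transpose_apply, hQ x w, Finset.sum_apply, Fin.sum_univ_two, of_apply,
      cons_val_zero, cons_val_one, hcol₀, hcol₁, mulVec_single, mulVec_smul, Pi.smul_apply,
      smul_eq_mul, col_apply, MulOpposite.smul_eq_mul_unop, MulOpposite.unop_op]
    ring

end CondMaj

section JointProb

variable {n m : ℕ} {Q : Matrix (Fin n) (Fin m) ℝ}

lemma JointProb.colSum_nonneg (hQ : JointProb Q) (w : Fin m) : 0 ≤ ColSum Q w :=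
  Finset.sum_nonneg fun x _ => hQ.1 x w

lemma JointProb.sum_colSum (hQ : JointProb Q) : ∑ w, ColSum Q w = 1 :=
  Finset.sum_comm.trans hQ.2

lemma colSum_mul_div (hQ : ∀ x w, 0 ≤ Q x w)
    (x : Fin n) (w : Fin m) : ColSum Q w * (Q x w / ColSum Q w) = Q x w := by
  rcases eq_or_ne (ColSum Q w) 0 with h | h
  · rw [h, zero_mul, eq_comm]
    exact (Finset.sum_eq_zero_iff_of_nonneg fun x _ => hQ x w).1 h x (Finset.mem_univ x)
  · exact mul_div_cancel₀ _ h

end JointProb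

open scoped Classical in
theorem stmt17_general {n m : ℕ} (ω : Fin (n + 1) → ℝ)
    (Q : Matrix (Fin (n + 1)) (Fin m) ℝ) (hQ : JointProb Q)
    (α : ℝ) (hα : α ∈ Set.Icc (0 : ℝ) 1)
    (h : 1 - α ≤
      ∑ w ∈ Finset.univ.filter
          (fun w => Majorizes ω (fun x => Q x w / ColSum Q w)), ColSum Q w) :
    CondMaj
      (Matrix.of fun (x : Fin (n + 1)) (j : Fin 2) =>
        if j = 0 then (if x = 0 then α else 0) else (1 - α) * ω x)
      Q := by
  set q := ColSum Q
  have hq0 : ∀ w, 0 ≤ q w := hQ.colSum_nonneg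
  have hq1 : ∑ w, q w = 1 := hQ.sum_colSum
  have : NeZero m := ⟨by rintro rfl; simp at hq1⟩
  obtain ⟨θ, hθ0, hθ1, hθW, hθq⟩ := exists_sum_mul_eq_of_le_sum (sub_nonneg.2 hα.2) h
  obtain ⟨r₀, hr₀, hr₀1, hr₀q⟩ := exists_sum_eq_one_mul_eq
    (fun w => mul_nonneg (sub_nonneg.2 (hθ1 w)) (hq0 w)) (t := α)
    (by simp only [sub_mul, one_mul, Finset.sum_sub_distrib, hq1, hθq, sub_sub_cancel])
  obtain ⟨r₁, hr₁, hr₁1, hr₁q⟩ := exists_sum_eq_one_mul_eq (fun w => mul_nonneg (hθ0 w) (hq0 w)) hθq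
  have hE : ∀ w, ∃ E ∈ doublyStochastic ℝ (Fin (n + 1)), ∀ x, q w * E x 0 = Q x w :=
    fun w => exists_mem_doublyStochastic_sum_mul_apply_zero fun x => hQ.1 x w
  choose E hE hEQ using hE
  have hM : ∀ w, ∃ M ∈ doublyStochastic ℝ (Fin (n + 1)),
      ∀ x, θ w * (q w * (M *ᵥ ω) x) = θ w * Q x w := by
    intro w
    by_cases hw : Majorizes ω fun x => Q x w / q w
    · obtain ⟨M, hM, hMω⟩ := hw.exists_mem_doublyStochastic
      exact ⟨M, hM, fun x => by rw [hMω, colSum_mul_div hQ.1]⟩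
    · exact ⟨1, one_mem _, fun x => by simp [hθW w (by simpa using hw)]⟩
  choose M hM hMQ using hM
  refine condMaj_omegaMatrix hr₀ hr₀1 hr₁ hr₁1 E M hE hM fun x w => ?_
  calc Q x w = (1 - θ w) * (q w * E w x 0) + θ w * (q w * (M w *ᵥ ω) x) := by
        rw [hMQ, hEQ]; ring
    _ = α * r₀ w * E w x 0 + (1 - α) * r₁ w * (M w *ᵥ ω) x := by
        rw [hr₀q, hr₁q]; ring

open scoped Classical in
theorem stmt17 {n m : ℕ} (ω : Fin (n + 1) → ℝ) (hω0 : ∀ x, 0 ≤ ω x) (hω1 : ∑ x, ω x = 1)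
    (Q : Matrix (Fin (n + 1)) (Fin m) ℝ) (hQ : JointProb Q)
    (α : ℝ) (hα : α ∈ Set.Icc (0 : ℝ) 1)
    (h : 1 - α ≤
      ∑ w ∈ Finset.univ.filter
          (fun w => Majorizes ω (fun x => Q x w / ColSum Q w)), ColSum Q w) :
    CondMaj
      (Matrix.of fun (x : Fin (n + 1)) (j : Fin 2) =>
        if j = 0 then (if x = 0 then α else 0) else (1 - α) * ω x)
      Q :=
  stmt17_general ω Q hQ α hα h
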